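/- arXiv:2603.01591 — 3 statements merged into one kernel-verified Lean document; each statement's English description precedes it below -/
import Mathlib

section
/- Suppose A is everywhere Fréchet differentiable with derivative map Lipschitz of constant L ≥ 0. Fix x, g ∈ E and α ≥ 0, and set s = x − x₀, r = A(x) − b, J = DA(x), and F̃(α) = (1/(2γ))‖s − α g‖² + (ρ/2)‖r − α J(g)‖². Then F(x − α g) ≤ F̃(α) + ρ·‖r − α J(g)‖·(L/2)·α²·‖g‖² + (ρ/2)·((L/2)·α²·‖g‖²)². -/
/-!
Along the segment `t ↦ x + t • v` the Taylor remainder `A (x + t • v) - A x - t • DA(x) v` has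
derivative `(DA(x + t • v) - DA(x)) v`, of norm at most `L ‖v‖² t`, so the remainder is at most
`(L / 2) ‖v‖²` at `t = 1`. With `v = -α g` this says that `A (x - α g) - b` lies within
`δ = (L / 2) α² ‖g‖²` of the linearised residual `r - α J g`, and squaring
`‖A (x - α g) - b‖ ≤ ‖r - α J g‖ + δ` gives the two extra terms of the bound.
-/

section LipschitzDerivative

variable {E M : Type*} [NormedAddCommGroup E] [NormedSpace ℝ E]
  [NormedAddCommGroup M] [NormedSpace ℝ M] {A : E → M} {L : ℝ}

theorem hasDerivAt_image_segment_sub_fderiv (hA : Differentiable ℝ A) (x v : E) (t : ℝ) :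
    HasDerivAt (fun t : ℝ => A (x + t • v) - A x - t • fderiv ℝ A x v)
      (fderiv ℝ A (x + t • v) v - fderiv ℝ A x v) t := by
  have hline : HasDerivAt (fun t : ℝ => x + t • v) v t := by
    simpa using ((hasDerivAt_id t).smul_const v).const_add x
  have hlin : HasDerivAt (fun t : ℝ => t • fderiv ℝ A x v) (fderiv ℝ A x v) t := by
    simpa using (hasDerivAt_id t).smul_const (fderiv ℝ A x v)
  exact (((hA _).hasFDerivAt.comp_hasDerivAt t hline).sub_const (A x)).sub hlin

theorem norm_fderiv_segment_apply_sub_le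
    (hLip : ∀ x y : E, ‖fderiv ℝ A x - fderiv ℝ A y‖ ≤ L * ‖x - y‖) (x v : E) {t : ℝ}
    (ht : 0 ≤ t) : ‖fderiv ℝ A (x + t • v) v - fderiv ℝ A x v‖ ≤ L * ‖v‖ ^ 2 * t :=
  calc ‖fderiv ℝ A (x + t • v) v - fderiv ℝ A x v‖
      ≤ ‖fderiv ℝ A (x + t • v) - fderiv ℝ A x‖ * ‖v‖ :=
        (fderiv ℝ A (x + t • v) - fderiv ℝ A x).le_opNorm v
    _ ≤ L * ‖t • v‖ * ‖v‖ := by gcongr; simpa using hLip (x + t • v) x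
    _ = L * ‖v‖ ^ 2 * t := by rw [norm_smul, Real.norm_of_nonneg ht]; ring

theorem norm_image_add_sub_sub_fderiv_le (hA : Differentiable ℝ A)
    (hLip : ∀ x y : E, ‖fderiv ℝ A x - fderiv ℝ A y‖ ≤ L * ‖x - y‖) (x v : E) :
    ‖A (x + v) - A x - fderiv ℝ A x v‖ ≤ L / 2 * ‖v‖ ^ 2 := by
  have hbound : ∀ t : ℝ, HasDerivAt (fun t => L / 2 * ‖v‖ ^ 2 * t ^ 2) (L * ‖v‖ ^ 2 * t) t :=
    fun t => ((hasDerivAt_pow 2 t).const_mul (L / 2 * ‖v‖ ^ 2)).congr_deriv (by norm_num; ring)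
  simpa using image_norm_le_of_norm_deriv_right_le_deriv_boundary
    (fun t _ => (hasDerivAt_image_segment_sub_fderiv hA x v t).continuousAt.continuousWithinAt)
    (fun t _ => (hasDerivAt_image_segment_sub_fderiv hA x v t).hasDerivWithinAt)
    (by simp) hbound (fun t ht => norm_fderiv_segment_apply_sub_le hLip x v ht.1)
    (Set.right_mem_Icc.2 zero_le_one)

end LipschitzDerivative

theorem sq_norm_le_of_norm_sub_le {M : Type*} [SeminormedAddCommGroup M] {y q : M} {δ : ℝ}
    (h : ‖y - q‖ ≤ δ) : ‖y‖ ^ 2 ≤ ‖q‖ ^ 2 + 2 * ‖q‖ * δ + δ ^ 2 :=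
  calc ‖y‖ ^ 2 ≤ (‖q‖ + δ) ^ 2 := by
        gcongr; exact (norm_le_norm_add_norm_sub' y q).trans (by linarith)
    _ = ‖q‖ ^ 2 + 2 * ‖q‖ * δ + δ ^ 2 := by ring

theorem stmt_6_general {E M : Type*}
    [NormedAddCommGroup E] [InnerProductSpace ℝ E]
    [NormedAddCommGroup M] [InnerProductSpace ℝ M]
    (A : E → M) (x₀ : E) (b : M) (γ ρ : ℝ) (hρ : 0 < ρ)
    (F : E → ℝ)
    (hF : ∀ x : E, F x = (1 / (2 * γ)) * ‖x - x₀‖ ^ 2 + (ρ / 2) * ‖A x - b‖ ^ 2)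
    (hA : Differentiable ℝ A)
    (L : ℝ)
    (hLip : ∀ x y : E, ‖fderiv ℝ A x - fderiv ℝ A y‖ ≤ L * ‖x - y‖)
    (x g : E) (α : ℝ)
    (s : E) (hs : s = x - x₀)
    (r : M) (hr : r = A x - b)
    (Ft : ℝ → ℝ)
    (hFt : ∀ β : ℝ, Ft β = (1 / (2 * γ)) * ‖s - β • g‖ ^ 2 +
      (ρ / 2) * ‖r - β • (fderiv ℝ A x g)‖ ^ 2) :
    F (x - α • g) ≤ Ft α + ρ * ‖r - α • (fderiv ℝ A x g)‖ * ((L / 2) * α ^ 2 * ‖g‖ ^ 2) +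
      (ρ / 2) * ((L / 2) * α ^ 2 * ‖g‖ ^ 2) ^ 2 := by
  have hremainder :
      ‖(A (x - α • g) - b) - (r - α • fderiv ℝ A x g)‖ ≤ L / 2 * α ^ 2 * ‖g‖ ^ 2 := by
    have h := norm_image_add_sub_sub_fderiv_le hA hLip x (-(α • g))
    rw [← sub_eq_add_neg, norm_neg, norm_smul, mul_pow, Real.norm_eq_abs, sq_abs, map_neg,
      map_smul, sub_neg_eq_add] at h
    calc ‖(A (x - α • g) - b) - (r - α • fderiv ℝ A x g)‖
        = ‖A (x - α • g) - A x + α • fderiv ℝ A x g‖ := by rw [hr]; congr 1; abel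
      _ ≤ L / 2 * (α ^ 2 * ‖g‖ ^ 2) := h
      _ = L / 2 * α ^ 2 * ‖g‖ ^ 2 := by ring
  have hsq := mul_le_mul_of_nonneg_left (sq_norm_le_of_norm_sub_le hremainder) (half_pos hρ).le
  rw [hF, hFt, hs, show x - α • g - x₀ = x - x₀ - α • g by abel]
  linarith

/-- Upper bound on `F(x − α g)` by the quadratic model plus remainder terms, when the
derivative map of `A` is Lipschitz with constant `L` and `α ≥ 0`. -/
theorem stmt_6 {E M : Type*}
    [NormedAddCommGroup E] [InnerProductSpace ℝ E] [FiniteDimensional ℝ E]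
    [NormedAddCommGroup M] [InnerProductSpace ℝ M] [FiniteDimensional ℝ M]
    (A : E → M) (x₀ : E) (b : M) (γ ρ : ℝ) (hγ : 0 < γ) (hρ : 0 < ρ)
    (F : E → ℝ)
    (hF : ∀ x : E, F x = (1 / (2 * γ)) * ‖x - x₀‖ ^ 2 + (ρ / 2) * ‖A x - b‖ ^ 2)
    (hA : Differentiable ℝ A)
    (L : ℝ) (hL : 0 ≤ L)
    (hLip : ∀ x y : E, ‖fderiv ℝ A x - fderiv ℝ A y‖ ≤ L * ‖x - y‖)
    (x g : E) (α : ℝ) (hα : 0 ≤ α)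
    (s : E) (hs : s = x - x₀)
    (r : M) (hr : r = A x - b)
    (Ft : ℝ → ℝ)
    (hFt : ∀ β : ℝ, Ft β = (1 / (2 * γ)) * ‖s - β • g‖ ^ 2 +
      (ρ / 2) * ‖r - β • (fderiv ℝ A x g)‖ ^ 2) :
    F (x - α • g) ≤ Ft α + ρ * ‖r - α • (fderiv ℝ A x g)‖ * ((L / 2) * α ^ 2 * ‖g‖ ^ 2) +
      (ρ / 2) * ((L / 2) * α ^ 2 * ‖g‖ ^ 2) ^ 2 :=
  stmt_6_general A x₀ b γ ρ hρ F hF hA L hLip x g α s hs r hr Ft hFt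
end

section
/- Let A : E → M be everywhere Fréchet differentiable, and fix x₀ ∈ E, y ∈ M, γ > 0, ρ > 0, ε > 0, and let C = {v ∈ M : ‖v − y‖ ≤ ε}. Suppose x* ∈ E and v*, u* ∈ M satisfy: (i) A(x*) = v*; (ii) v* is a minimizer of v ↦ ‖v − (A(x*) + u*)‖ over C; and (iii) (1/γ)(x* − x₀) + ρ·(DA(x*))†(A(x*) − v* + u*) = 0. Then ‖A(x*) − y‖ ≤ ε, and there exists λ ≥ 0 such that λ·(‖A(x*) − y‖ − ε) = 0 and (1/γ)(x* − x₀) + λ·(DA(x*))†(ν) = 0, where ν = (A(x*) − y)/‖A(x*) − y‖ if ‖A(x*) − y‖ = ε and ν = 0 otherwise; that is, fixed points of the exact scaled ADMM iteration satisfy the KKT conditions of the constrained proximal problem min_x (1/(2γ))‖x − x₀‖² subject to ‖A(x) − y‖ ≤ ε. -/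
open RealInnerProductSpace

/-- Fixed points of the exact scaled ADMM iteration satisfy the KKT conditions of the
constrained proximal problem `min_x (1/(2γ))‖x − x₀‖²` s.t. `‖A(x) − y‖ ≤ ε`. -/
theorem stmt_11 {E M : Type*}
    [NormedAddCommGroup E] [InnerProductSpace ℝ E] [FiniteDimensional ℝ E]
    [NormedAddCommGroup M] [InnerProductSpace ℝ M] [FiniteDimensional ℝ M]
    (A : E → M) (hA : Differentiable ℝ A)
    (x₀ : E) (y : M) (γ ρ : ℝ) (hγ : 0 < γ) (hρ : 0 < ρ) (ε : ℝ) (hε : 0 < ε)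
    (xs : E) (vs us : M)
    -- (i) dual feasibility at a fixed point: A(x*) = v*
    (hi : A xs = vs)
    -- (ii) v* minimizes v ↦ ‖v − (A(x*) + u*)‖ over the ball C = {v : ‖v − y‖ ≤ ε}
    (hiiC : ‖vs - y‖ ≤ ε)
    (hii : ∀ v : M, ‖v - y‖ ≤ ε → ‖vs - (A xs + us)‖ ≤ ‖v - (A xs + us)‖)
    -- (iii) first-order optimality of the x-update
    (hiii : (1 / γ) • (xs - x₀) +
      ρ • (ContinuousLinearMap.adjoint (fderiv ℝ A xs) (A xs - vs + us)) = 0)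
    (ν : M)
    (hν : ν = if ‖A xs - y‖ = ε then ‖A xs - y‖⁻¹ • (A xs - y) else 0) :
    ‖A xs - y‖ ≤ ε ∧
      ∃ lam : ℝ, 0 ≤ lam ∧ lam * (‖A xs - y‖ - ε) = 0 ∧
        (1 / γ) • (xs - x₀) +
          lam • (ContinuousLinearMap.adjoint (fderiv ℝ A xs) ν) = 0 := by
  subst hi
  set T := ContinuousLinearMap.adjoint (fderiv ℝ A xs) with hT
  have hiii' : (1 / γ) • (xs - x₀) + ρ • T us = 0 := by
    simpa using hiii
  -- quadratic inequality from the minimization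
  have h2 : ∀ v : M, ‖v - y‖ ≤ ε → ⟪us, v - A xs⟫ ≤ ‖v - A xs‖ ^ 2 / 2 := by
    intro v hv
    have h := hii v hv
    have h1 : ‖us‖ ≤ ‖(v - A xs) - us‖ := by
      have : A xs - (A xs + us) = -us := by abel
      rw [this, norm_neg] at h
      convert h using 2
      abel
    have hsq : ‖us‖ ^ 2 ≤ ‖(v - A xs) - us‖ ^ 2 :=
      pow_le_pow_left₀ (norm_nonneg _) h1 2
    have hexp : ‖(v - A xs) - us‖ ^ 2 =
        ‖v - A xs‖ ^ 2 - 2 * ⟪v - A xs, us⟫ + ‖us‖ ^ 2 := by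
      rw [norm_sub_sq_real]
    rw [real_inner_comm]
    nlinarith [hsq, hexp]
  -- variational inequality
  have hVI : ∀ z : M, ‖z - y‖ ≤ ε → ⟪us, z - A xs⟫ ≤ 0 := by
    intro z hz
    by_contra hpos
    push_neg at hpos
    set a : ℝ := ⟪us, z - A xs⟫ with ha
    set c : ℝ := ‖z - A xs‖ ^ 2 / 2 with hc
    have hc0 : 0 ≤ c := by positivity
    have key : ∀ t : ℝ, 0 < t → t ≤ 1 → a ≤ t * c := by
      intro t ht0 ht1
      have hin : ‖(A xs + t • (z - A xs)) - y‖ ≤ ε := by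
        have heq : (A xs + t • (z - A xs)) - y = (1 - t) • (A xs - y) + t • (z - y) := by
          module
        rw [heq]
        calc ‖(1 - t) • (A xs - y) + t • (z - y)‖
            ≤ ‖(1 - t) • (A xs - y)‖ + ‖t • (z - y)‖ := norm_add_le _ _
          _ = (1 - t) * ‖A xs - y‖ + t * ‖z - y‖ := by
              rw [norm_smul, norm_smul, Real.norm_eq_abs, Real.norm_eq_abs,
                abs_of_nonneg (by linarith), abs_of_nonneg ht0.le]
          _ ≤ (1 - t) * ε + t * ε := by
              have h1t : (0:ℝ) ≤ 1 - t := by linarith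
              have := mul_le_mul_of_nonneg_left hiiC h1t
              have := mul_le_mul_of_nonneg_left hz ht0.le
              linarith
          _ = ε := by ring
      have := h2 (A xs + t • (z - A xs)) hin
      have hsimp : (A xs + t • (z - A xs)) - A xs = t • (z - A xs) := by abel
      rw [hsimp, real_inner_smul_right, norm_smul, Real.norm_eq_abs,
        abs_of_nonneg ht0.le, mul_pow] at this
      -- t * a ≤ t^2 * ‖z - A xs‖^2 / 2
      have : a ≤ t * c := by
        rw [hc]
        have ht0' := ht0
        nlinarith
      exact this
    have h1 : a ≤ c := by have := key 1 one_pos le_rfl; linarith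
    have hcpos : 0 < c := lt_of_lt_of_le hpos h1
    have ht : 0 < a / (2 * c) := by positivity
    have ht1 : a / (2 * c) ≤ 1 := by rw [div_le_one (by positivity)]; linarith
    have h2' := key _ ht ht1
    have hhalf : a / (2 * c) * c = a / 2 := by field_simp
    rw [hhalf] at h2'
    linarith
  by_cases hus : us = 0
  · refine ⟨hiiC, 0, le_rfl, by ring, ?_⟩
    rw [hus] at hiii'
    simpa using hiii'
  · -- us ≠ 0 : boundary case
    have husn : 0 < ‖us‖ := norm_pos_iff.mpr hus
    have hz : ‖(y + (ε * ‖us‖⁻¹) • us) - y‖ ≤ ε := by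
      have : (y + (ε * ‖us‖⁻¹) • us) - y = (ε * ‖us‖⁻¹) • us := by abel
      rw [this, norm_smul, Real.norm_eq_abs, abs_of_nonneg (by positivity)]
      rw [mul_assoc, inv_mul_cancel₀ husn.ne', mul_one]
    have h1 := hVI _ hz
    have hrw : (y + (ε * ‖us‖⁻¹) • us) - A xs = (ε * ‖us‖⁻¹) • us - (A xs - y) := by abel
    rw [hrw, inner_sub_right, real_inner_smul_right, real_inner_self_eq_norm_sq] at h1
    have h1' : ε * ‖us‖ ≤ ⟪us, A xs - y⟫ := by
      have he : ε * ‖us‖⁻¹ * ‖us‖ ^ 2 = ε * ‖us‖ := by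
        field_simp
      rw [he] at h1
      linarith
    have hCS : ⟪us, A xs - y⟫ ≤ ‖us‖ * ‖A xs - y‖ := real_inner_le_norm _ _
    have hb : ‖A xs - y‖ = ε := by
      refine le_antisymm hiiC ?_
      by_contra hlt
      push_neg at hlt
      have hm := mul_lt_mul_of_pos_left hlt husn
      have hcomm : ε * ‖us‖ = ‖us‖ * ε := mul_comm _ _
      linarith
    have heq : ⟪us, A xs - y⟫ = ‖us‖ * ‖A xs - y‖ := by
      refine le_antisymm hCS ?_
      rw [hb]; linarith
    have hpar : ‖A xs - y‖ • us = ‖us‖ • (A xs - y) :=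
      (inner_eq_norm_mul_iff_real).mp heq
    rw [hb] at hpar
    have hnν : ν = ε⁻¹ • (A xs - y) := by
      rw [hν, if_pos hb, hb]
    refine ⟨hiiC, ρ * ‖us‖, by positivity, by rw [hb]; ring, ?_⟩
    have hsm : (ρ * ‖us‖) • ν = ρ • us := by
      have e1 : (ρ * ‖us‖) • ν = (ρ * ε⁻¹) • (‖us‖ • (A xs - y)) := by
        rw [hnν, smul_smul, smul_smul]; ring_nf
      rw [e1, ← hpar, smul_smul]
      have e2 : ρ * ε⁻¹ * ε = ρ := by field_simp
      rw [e2]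
    have : (ρ * ‖us‖) • T ν = ρ • T us := by
      rw [← map_smul, hsm, map_smul]
    rw [this]
    exact hiii'
end

section
/- Let Σ be a d × d real symmetric positive semidefinite matrix and let σ > 0. Then the matrix I + σ⁻²·Σ is positive definite (so its determinant is positive), and trace(Σ)/σ² − log(det(I + σ⁻²·Σ)) ≤ ‖Σ‖_F² / (2σ⁴), where ‖Σ‖_F² = trace(Σᵀ Σ) is the squared Frobenius norm. -/
/-!
Writing `A = σ⁻²Σ` with eigenvalues `λᵢ ≥ 0`, the functional calculus gives `tr A = ∑ λᵢ`,
`det (I + A) = ∏ (1 + λᵢ)` and `tr (AᵀA) = ∑ λᵢ²`, so the inequality is the sum over `i` of the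
scalar bound `x - log (1 + x) ≤ x² / 2` for `x ≥ 0`, which holds because
`log (1 + x) - x + x² / 2` vanishes at `0` and has derivative `x² / (1 + x) ≥ 0`.
-/

open Matrix

lemma Real.sub_log_one_add_le_sq_div_two {x : ℝ} (hx : 0 ≤ x) :
    x - Real.log (1 + x) ≤ x ^ 2 / 2 := by
  let f : ℝ → ℝ := fun y ↦ Real.log (1 + y) - y + y ^ 2 / 2
  have hf : ∀ y ∈ Set.Ici (0 : ℝ), HasDerivAt f (y ^ 2 / (1 + y)) y := fun y hy ↦ by
    have hy : 0 < 1 + y := by rw [Set.mem_Ici] at hy; linarith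
    have := ((((hasDerivAt_id y).const_add 1).log hy.ne').sub (hasDerivAt_id y)).add
      ((hasDerivAt_pow 2 y).div_const 2)
    refine this.congr_deriv ?_
    simp only [id, one_div]
    field_simp
    ring
  have hmono : MonotoneOn f (Set.Ici 0) :=
    monotoneOn_of_hasDerivWithinAt_nonneg (convex_Ici 0)
      (fun y hy ↦ (hf y hy).continuousAt.continuousWithinAt)
      (fun y hy ↦ (hf y (interior_subset hy)).hasDerivWithinAt)
      (fun y hy ↦ by rw [interior_Ici] at hy; have : 0 < y := hy; positivity)
  have := hmono Set.self_mem_Ici hx hx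
  simp only [f, add_zero, Real.log_one, sub_zero] at this
  linarith

namespace Matrix.IsHermitian

variable {𝕜 n : Type*} [RCLike 𝕜] [Fintype n] [DecidableEq n] {A : Matrix n n 𝕜}

lemma trace_cfc (hA : A.IsHermitian) (f : ℝ → ℝ) :
    (cfc f A).trace = ∑ i, (f (hA.eigenvalues i) : 𝕜) := by
  rw [hA.cfc_eq, IsHermitian.cfc, Unitary.conjStarAlgAut_apply, trace_mul_cycle,
    Unitary.coe_star_mul_self, one_mul, trace_diagonal]
  rfl

lemma det_cfc (hA : A.IsHermitian) (f : ℝ → ℝ) :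
    (cfc f A).det = ∏ i, (f (hA.eigenvalues i) : 𝕜) := by
  rw [hA.cfc_eq, IsHermitian.cfc, Unitary.conjStarAlgAut_apply,
    det_conj_of_mul_eq_one (Unitary.coe_mul_star_self _) (Unitary.coe_star_mul_self _),
    det_diagonal]
  rfl

end Matrix.IsHermitian

lemma Matrix.PosSemidef.trace_sub_log_det_one_add_le {n : Type*} [Fintype n] [DecidableEq n]
    {A : Matrix n n ℝ} (hA : A.PosSemidef) :
    A.trace - Real.log (1 + A).det ≤ (Aᵀ * A).trace / 2 := by
  have hH := hA.isHermitian
  have h_nonneg := hA.eigenvalues_nonneg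
  have h_one_add : 1 + A = cfc (fun x : ℝ ↦ 1 + x) A := by
    rw [cfc_const_add 1 (fun x : ℝ ↦ x) A, cfc_id' ℝ A, map_one]
  have h_sq : Aᵀ * A = cfc (fun x : ℝ ↦ x ^ 2) A := by
    rw [cfc_pow_id A 2, ← conjTranspose_eq_transpose_of_trivial, hH.eq, sq]
  have h_log_det : Real.log (1 + A).det = ∑ i, Real.log (1 + hH.eigenvalues i) := by
    rw [h_one_add, hH.det_cfc]
    exact Real.log_prod fun i _ ↦ by
      have := h_nonneg i
      simp only [RCLike.ofReal_real_eq_id, id]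
      positivity
  rw [h_log_det, hH.trace_eq_sum_eigenvalues, h_sq, hH.trace_cfc, ← Finset.sum_sub_distrib,
    Finset.sum_div]
  exact Finset.sum_le_sum fun i _ ↦ by simpa using Real.sub_log_one_add_le_sq_div_two (h_nonneg i)

theorem stmt_13_general {d : ℕ} (S : Matrix (Fin d) (Fin d) ℝ) (hS : S.PosSemidef)
    (σ : ℝ) :
    ((1 : Matrix (Fin d) (Fin d) ℝ) + (σ ^ 2)⁻¹ • S).PosDef ∧
      0 < ((1 : Matrix (Fin d) (Fin d) ℝ) + (σ ^ 2)⁻¹ • S).det ∧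
      S.trace / σ ^ 2 -
          Real.log (((1 : Matrix (Fin d) (Fin d) ℝ) + (σ ^ 2)⁻¹ • S).det) ≤
        (Sᵀ * S).trace / (2 * σ ^ 4) := by
  have hA : ((σ ^ 2)⁻¹ • S).PosSemidef := hS.smul (by positivity)
  have hPD : ((1 : Matrix (Fin d) (Fin d) ℝ) + (σ ^ 2)⁻¹ • S).PosDef :=
    PosDef.one.add_posSemidef hA
  refine ⟨hPD, hPD.det_pos, ?_⟩
  have key := hA.trace_sub_log_det_one_add_le
  rw [trace_smul, transpose_smul, smul_mul_smul_comm, trace_smul, smul_eq_mul, smul_eq_mul] at key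
  convert key using 1 <;> ring

/-- For a symmetric positive semidefinite `Σ` and `σ > 0`, the matrix `I + σ⁻²Σ` is
positive definite (hence has positive determinant) and
`tr(Σ)/σ² − log det(I + σ⁻²Σ) ≤ ‖Σ‖_F²/(2σ⁴)`. -/
theorem stmt_13 {d : ℕ} (S : Matrix (Fin d) (Fin d) ℝ) (hS : S.PosSemidef)
    (σ : ℝ) (hσ : 0 < σ) :
    ((1 : Matrix (Fin d) (Fin d) ℝ) + (σ ^ 2)⁻¹ • S).PosDef ∧
      0 < ((1 : Matrix (Fin d) (Fin d) ℝ) + (σ ^ 2)⁻¹ • S).det ∧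
      S.trace / σ ^ 2 -
          Real.log (((1 : Matrix (Fin d) (Fin d) ℝ) + (σ ^ 2)⁻¹ • S).det) ≤
        (Sᵀ * S).trace / (2 * σ ^ 4) :=
  stmt_13_general S hS σ
end
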